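/- arXiv:cs/0606033 — 2 statements merged into one kernel-verified Lean document; each statement's English description precedes it below -/
import Mathlib

section
/- Let s ≥ 1 be a computable real, U a universal self-delimiting Turing machine, T a universal Turing machine, and α ∈ (0,1) a real with binary digit sequence x. Then the following are equivalent: (1) liminf_{n→∞} K_T(x_0 ⋯ x_{n−1})/n ≥ 1/s; (2) for every computable real t > s there exists a constant c ≥ 0 such that K_T(x_0 ⋯ x_{m−1}) ≥ m/t − c for all m ≥ 1; (3) for every computable real t > s there exists a constant c ≥ 0 such that H_U(x_0 ⋯ x_{m−1}) ≥ m/t − c for all m ≥ 1. -/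
open scoped ENNReal

/-- The domain of a Turing machine (a partial function on binary strings). -/
def dom (f : List Bool →. List Bool) : Set (List Bool) := {p | (f p).Dom}

/-- A machine is self-delimiting if its domain is prefix-free. -/
def SelfDelim (f : List Bool →. List Bool) : Prop :=
  ∀ p ∈ dom f, ∀ q ∈ dom f, p <+: q → p = q

/-- Chaitin's Omega number of a machine, in `[0,∞]`. -/
noncomputable def Omega (f : List Bool →. List Bool) : ℝ≥0∞ :=
  ∑' p : dom f, (2 : ℝ≥0∞)⁻¹ ^ (p : List Bool).length

/-- `bin n` is the binary expansion of `n` with the leading 1 removed. -/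
def bin (n : ℕ) : List Bool := (Nat.bits n).reverse.tail

/-- `Υ[A]`: the set of positive integers whose `bin`-code lies in `A`. -/
def Ups (A : Set (List Bool)) : Set ℕ := {n | 1 ≤ n ∧ bin n ∈ A}

/-- The zeta number of a machine, in `[0,∞]`. -/
noncomputable def zeta (f : List Bool →. List Bool) : ℝ≥0∞ :=
  ∑' n : Ups (dom f), ((n : ℕ) : ℝ≥0∞)⁻¹

/-- `U` is a universal self-delimiting Turing machine. -/
def UnivSD (U : List Bool →. List Bool) : Prop :=
  SelfDelim U ∧ ∀ C : List Bool →. List Bool, Partrec C → SelfDelim C →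
    ∃ c : ℕ, ∀ x ∈ dom C, ∃ p : List Bool, p.length ≤ x.length + c ∧ U p = C x

/-- `T` is a universal (plain) Turing machine. -/
def UnivTM (T : List Bool →. List Bool) : Prop :=
  ∀ C : List Bool →. List Bool, Partrec C →
    ∃ c : ℕ, ∀ x ∈ dom C, ∃ p : List Bool, p.length ≤ x.length + c ∧ T p = C x

/-- Program-size / plain complexity of a string w.r.t. a machine. -/
noncomputable def Cpx (f : List Bool →. List Bool) (y : List Bool) : ℕ :=
  sInf {n : ℕ | ∃ w : List Bool, w.length = n ∧ y ∈ f w}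

/-- Natural complexity of a string w.r.t. a machine, with `min ∅ = ∞`. -/
noncomputable def nabla (f : List Bool →. List Bool) (y : List Bool) : ℝ≥0∞ :=
  sInf {c : ℝ≥0∞ | ∃ n : ℕ, 1 ≤ n ∧ y ∈ f (bin n) ∧ c = (n : ℝ≥0∞)}

/-- The real number with binary digit sequence `x`. -/
noncomputable def realDigits (x : ℕ → Bool) : ℝ :=
  ∑' i : ℕ, (if x i then (1 : ℝ) else 0) * (2 : ℝ)⁻¹ ^ (i + 1)

/-- The extended nonnegative real with binary digit sequence `x`. -/
noncomputable def ennDigits (x : ℕ → Bool) : ℝ≥0∞ :=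
  ∑' i : ℕ, (if x i then (1 : ℝ≥0∞) else 0) * (2 : ℝ≥0∞)⁻¹ ^ (i + 1)

/-- The string of the first `m` digits of the sequence `x`. -/
def prefixStr (x : ℕ → Bool) (m : ℕ) : List Bool := (List.range m).map x

/-- A real is computable if it is approximated to within `2⁻ⁿ` by a computable
sequence of rationals. -/
def ComputableReal (s : ℝ) : Prop :=
  ∃ f : ℕ → ℚ, Computable f ∧ ∀ n : ℕ, |s - (f n : ℝ)| ≤ (2 : ℝ)⁻¹ ^ n

/-!
Lower bounds `K(x₀⋯x_{m-1}) ≥ m/t - O(1)` are stable under changing `t` by an arbitrarily small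
amount, and `1/s ≤ liminf K(x₀⋯x_{n-1})/n` says exactly that they hold for every `t > s`; by
density it suffices to take `t` rational, hence computable. Plain complexity dominates prefix
complexity up to a constant, since a universal machine simulates the self-delimiting one.
Conversely a plain program `r` becomes self-delimiting when prefixed by `|r|` written as
`|r| / N` and `|r| % N` in unary: this costs `|r| / N + O_N(1)` bits, and
`H ≤ (1 + 1/N) K + O_N(1)` only shifts the rate `1/t` by at most `1/N`.
-/

open Filter Function

theorem Computable.partrec_partialInv {α β : Type*} [Primcodable α] [Primcodable β]
    [DecidableEq β] {E : α → β} (hE : Computable E) (hinj : Injective E) :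
    Partrec fun b => (partialInv E b : Part α) := by
  let g : β → ℕ → Option α := fun b n =>
    (Encodable.decode n : Option α).bind fun a => bif E a == b then some a else none
  have hg : Computable₂ g :=
    Computable.option_bind (Computable.decode.comp Computable.snd) <|
      Computable.cond (Primrec.beq.to_comp.comp (hE.comp Computable.snd)
        (Computable.fst.comp Computable.fst))
      (Computable.option_some.comp Computable.snd) (Computable.const none)
  refine (Partrec.rfindOpt hg).of_eq fun b => Part.ext fun a => ?_
  have mem_g : ∀ a n, a ∈ g b n ↔ Encodable.decode n = some a ∧ E a = b := by
    intro a n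
    simp only [g, Option.mem_def, Option.bind_eq_some_iff]
    constructor
    · rintro ⟨a', ha', h⟩
      cases hEa : E a' == b <;> simp_all
    · rintro ⟨h, rfl⟩
      exact ⟨a, h, by simp⟩
  have mem_rfindOpt : a ∈ Nat.rfindOpt (g b) ↔ E a = b := by
    refine ⟨fun h => ?_, fun h => ?_⟩
    · obtain ⟨n, hn⟩ := Nat.rfindOpt_spec h
      exact ((mem_g a n).1 hn).2
    · obtain ⟨a', ha'⟩ := Part.dom_iff_mem.1 <|
        Nat.rfindOpt_dom.2 ⟨Encodable.encode a, a, (mem_g a _).2 ⟨Encodable.encodek a, h⟩⟩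
      obtain ⟨n, hn⟩ := Nat.rfindOpt_spec ha'
      rwa [hinj (((mem_g a' n).1 hn).2.trans h.symm)] at ha'
  rw [mem_rfindOpt, Part.mem_ofOption, Option.mem_def, hinj.isPartialInv]

section BlockCode

def unary (n : ℕ) : List Bool := List.replicate n true ++ [false]

theorem unary_append_inj {a b : ℕ} {l₁ l₂ : List Bool} (h : unary a ++ l₁ = unary b ++ l₂) :
    a = b ∧ l₁ = l₂ := by
  induction a generalizing b with
  | zero => cases b <;> simp_all [unary, List.replicate_succ]
  | succ a ih =>
    cases b with
    | zero => simp [unary, List.replicate_succ] at h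
    | succ b =>
      obtain ⟨rfl, rfl⟩ := ih (b := b) (by simpa [unary, List.replicate_succ] using h)
      exact ⟨rfl, rfl⟩

theorem primrec_unary : Primrec unary := by
  refine (Primrec.list_append.comp
    (Primrec.list_map Primrec.list_range (Primrec₂.const true)) (Primrec.const [false])).of_eq
    fun n => ?_
  simp [unary, List.map_const']

def blockCode (N : ℕ) (r : List Bool) : List Bool :=
  unary (r.length / N) ++ unary (r.length % N) ++ r

variable {N : ℕ}

theorem blockCode_append_inj {r₁ r₂ l₁ l₂ : List Bool}
    (h : blockCode N r₁ ++ l₁ = blockCode N r₂ ++ l₂) : r₁ = r₂ ∧ l₁ = l₂ := by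
  simp only [blockCode, List.append_assoc] at h
  obtain ⟨hdiv, h⟩ := unary_append_inj h
  obtain ⟨hmod, h⟩ := unary_append_inj h
  have hlen : r₁.length = r₂.length := by
    rw [← Nat.div_add_mod r₁.length N, hdiv, hmod, Nat.div_add_mod]
  exact List.append_inj h hlen

theorem blockCode_injective : Injective (blockCode N) := fun r₁ r₂ h =>
  (blockCode_append_inj (l₁ := []) (l₂ := []) (by simpa using h)).1

theorem blockCode_eq_of_prefix {r₁ r₂ : List Bool} (h : blockCode N r₁ <+: blockCode N r₂) :
    blockCode N r₁ = blockCode N r₂ := by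
  obtain ⟨l, hl⟩ := h
  obtain ⟨rfl, -⟩ := blockCode_append_inj (r₁ := r₁) (l₁ := l) (l₂ := []) (by simpa using hl)
  rfl

theorem length_blockCode_le (hN : 0 < N) (r : List Bool) :
    (blockCode N r).length ≤ r.length + r.length / N + N + 1 := by
  have := Nat.mod_lt r.length hN
  simp only [blockCode, unary, List.length_append, List.length_replicate, List.length_cons,
    List.length_nil]
  omega

theorem primrec_blockCode : Primrec (blockCode N) :=
  Primrec.list_append.comp
    (Primrec.list_append.comp
      (primrec_unary.comp (Primrec.nat_div.comp Primrec.list_length (Primrec.const N)))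
      (primrec_unary.comp (Primrec.nat_mod.comp Primrec.list_length (Primrec.const N))))
    Primrec.id

noncomputable def prefixMachine (N : ℕ) (M : List Bool →. List Bool) : List Bool →. List Bool :=
  fun q => (partialInv (blockCode N) q : Part (List Bool)).bind M

variable {M : List Bool →. List Bool}

theorem prefixMachine_blockCode (r : List Bool) : prefixMachine N M (blockCode N r) = M r := by
  simp only [prefixMachine, partialInv_left blockCode_injective, Part.coe_some]
  exact Part.bind_some r M

theorem selfDelim_prefixMachine : SelfDelim (prefixMachine N M) := by
  have mem_range : ∀ q ∈ dom (prefixMachine N M), ∃ r, blockCode N r = q := by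
    intro q hq
    obtain ⟨r, hr⟩ := Option.isSome_iff_exists.1 ((Part.ofOption_dom _).1 (Part.Dom.of_bind hq))
    exact ⟨r, (blockCode_injective.isPartialInv r q).1 hr⟩
  rintro p hp q hq hpq
  obtain ⟨r₁, rfl⟩ := mem_range p hp
  obtain ⟨r₂, rfl⟩ := mem_range q hq
  exact blockCode_eq_of_prefix hpq

theorem Partrec.prefixMachine (hM : Partrec M) : Partrec (prefixMachine N M) :=
  (primrec_blockCode.to_comp.partrec_partialInv blockCode_injective).bind (g := fun _ r => M r)
    (hM.comp Computable.snd)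

end BlockCode

section Complexity

variable {V C : List Bool →. List Bool}

theorem cpx_le_of_mem {y w : List Bool} (h : y ∈ V w) : Cpx V y ≤ w.length :=
  Nat.sInf_le ⟨w, rfl, h⟩

theorem exists_length_eq_cpx {y : List Bool} (h : ∃ w, y ∈ V w) :
    ∃ w, w.length = Cpx V y ∧ y ∈ V w := by
  obtain ⟨w, hw⟩ := h
  exact Nat.sInf_mem (s := {n | ∃ w : List Bool, w.length = n ∧ y ∈ V w}) ⟨w.length, w, rfl, hw⟩

theorem exists_mem_of_simulates {c : ℕ}
    (h : ∀ x ∈ dom C, ∃ p : List Bool, p.length ≤ x.length + c ∧ V p = C x)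
    {x y : List Bool} (hy : y ∈ C x) : ∃ p, p.length ≤ x.length + c ∧ y ∈ V p := by
  obtain ⟨p, hp, hVp⟩ := h x (Part.dom_iff_mem.2 ⟨y, hy⟩)
  exact ⟨p, hp, hVp ▸ hy⟩

theorem cpx_le_of_simulates {c : ℕ}
    (h : ∀ x ∈ dom C, ∃ p : List Bool, p.length ≤ x.length + c ∧ V p = C x)
    {x y : List Bool} (hy : y ∈ C x) : Cpx V y ≤ x.length + c := by
  obtain ⟨p, hp, hyp⟩ := exists_mem_of_simulates h hy
  exact (cpx_le_of_mem hyp).trans hp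

theorem UnivTM.exists_cpx_le_length {T : List Bool →. List Bool} (hT : UnivTM T) :
    ∃ c, ∀ y, Cpx T y ≤ y.length + c := by
  obtain ⟨c, hc⟩ := hT (fun l => Part.some l) Computable.id
  exact ⟨c, fun y => cpx_le_of_simulates hc (Part.mem_some y)⟩

theorem UnivTM.exists_mem {T : List Bool →. List Bool} (hT : UnivTM T) (y : List Bool) :
    ∃ p, y ∈ T p := by
  obtain ⟨c, hc⟩ := hT (fun l => Part.some l) Computable.id
  obtain ⟨p, -, hp⟩ := exists_mem_of_simulates hc (Part.mem_some y)
  exact ⟨p, hp⟩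

theorem UnivTM.exists_cpx_le_cpx {T : List Bool →. List Bool} (hT : UnivTM T) (hV : Partrec V)
    (hVsurj : ∀ y, ∃ p, y ∈ V p) : ∃ c, ∀ y, Cpx T y ≤ Cpx V y + c := by
  obtain ⟨c, hc⟩ := hT V hV
  refine ⟨c, fun y => ?_⟩
  obtain ⟨w, hw, hyw⟩ := exists_length_eq_cpx (hVsurj y)
  exact hw ▸ cpx_le_of_simulates hc hyw

theorem UnivSD.exists_mem {U : List Bool →. List Bool} (hU : UnivSD U) (y : List Bool) :
    ∃ p, y ∈ U p := by
  obtain ⟨c, hc⟩ := hU.2 (prefixMachine 0 (PFun.id _))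
    (Computable.id : Partrec (PFun.id (List Bool))).prefixMachine selfDelim_prefixMachine
  have hy : y ∈ prefixMachine 0 (PFun.id _) (blockCode 0 y) := by
    rw [prefixMachine_blockCode]
    exact Part.mem_some y
  obtain ⟨p, -, hp⟩ := exists_mem_of_simulates hc hy
  exact ⟨p, hp⟩

theorem UnivSD.exists_cpx_le {U : List Bool →. List Bool} (hU : UnivSD U) (hV : Partrec V)
    (hVsurj : ∀ y, ∃ p, y ∈ V p) {N : ℕ} (hN : 0 < N) :
    ∃ c, ∀ y, Cpx U y ≤ Cpx V y + Cpx V y / N + c := by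
  obtain ⟨c, hc⟩ := hU.2 (prefixMachine N V) hV.prefixMachine selfDelim_prefixMachine
  refine ⟨N + 1 + c, fun y => ?_⟩
  obtain ⟨w, hw, hyw⟩ := exists_length_eq_cpx (hVsurj y)
  have := cpx_le_of_simulates hc
    (by rwa [prefixMachine_blockCode] : y ∈ prefixMachine N V (blockCode N w))
  have := length_blockCode_le hN w
  rw [← hw]
  omega

theorem UnivSD.exists_cpx_le_cpx_add_length_div {U T : List Bool →. List Bool} (hU : UnivSD U)
    (hT : Partrec T) (hTuniv : UnivTM T) {N : ℕ} (hN : 0 < N) :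
    ∃ c : ℝ, 0 ≤ c ∧ ∀ y, (Cpx U y : ℝ) ≤ Cpx T y + y.length / N + c := by
  obtain ⟨c, hc⟩ := hU.exists_cpx_le hT hTuniv.exists_mem hN
  obtain ⟨c₁, hc₁⟩ := hTuniv.exists_cpx_le_length
  refine ⟨c + c₁, by positivity, fun y => ?_⟩
  have hN1 : (1 : ℝ) ≤ N := by exact_mod_cast hN
  calc (Cpx U y : ℝ) ≤ Cpx T y + ((Cpx T y / N : ℕ) : ℝ) + c := by exact_mod_cast hc y
    _ ≤ Cpx T y + (y.length + c₁) / N + c := by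
      gcongr
      exact Nat.cast_div_le.trans (by gcongr; exact_mod_cast hc₁ y)
    _ ≤ Cpx T y + y.length / N + (c + c₁) := by
      rw [add_div]
      have : (c₁ : ℝ) / N ≤ c₁ := div_le_self (Nat.cast_nonneg _) hN1
      linarith

end Complexity

section LinearLowerBound

/-- For `K m` the complexity of the first `m` digits of `x`, this says that `x` is `1/t`-random. -/
def LinearLowerBound (t : ℝ) (K : ℕ → ℝ) : Prop :=
  ∃ c : ℝ, 0 ≤ c ∧ ∀ m : ℕ, 1 ≤ m → K m ≥ m / t - c

variable {K H : ℕ → ℝ} {s t : ℝ}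

theorem LinearLowerBound.of_lt_liminf (hK : ∀ n, 0 ≤ K n) (ht : 0 < t)
    (h : 1 / t < liminf (fun n => K n / n) atTop) : LinearLowerBound t K := by
  have hbdd : IsBoundedUnder (· ≥ ·) atTop fun n => K n / n :=
    isBoundedUnder_of ⟨0, fun n => div_nonneg (hK n) n.cast_nonneg⟩
  obtain ⟨M, hM⟩ := eventually_atTop.1 (eventually_lt_of_lt_liminf h hbdd)
  refine ⟨M / t, by positivity, fun m hm => ?_⟩
  rcases le_or_gt M m with hMm | hmM
  · have hm0 : (0 : ℝ) < m := by exact_mod_cast hm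
    have : (m : ℝ) / t < K m := by
      have := hM m hMm
      rwa [lt_div_iff₀ hm0, one_div_mul_eq_div] at this
    linarith [div_nonneg M.cast_nonneg ht.le]
  · have : (m : ℝ) / t ≤ M / t := by gcongr
    linarith [hK m]

theorem isBoundedUnder_le_div_of_le_add {c : ℝ} (hK : ∀ n, K n ≤ n + c) :
    IsBoundedUnder (· ≤ ·) atTop fun n => K n / n := by
  refine isBoundedUnder_of ⟨1 + |c|, fun n => ?_⟩
  rcases n.eq_zero_or_pos with rfl | hn
  · simp [add_nonneg]
  · have hn' : (1 : ℝ) ≤ n := by exact_mod_cast hn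
    rw [div_le_iff₀ (by positivity)]
    nlinarith [hK n, le_abs_self c, abs_nonneg c]

theorem le_liminf_of_linearLowerBound (hK : IsBoundedUnder (· ≤ ·) atTop fun n => K n / n)
    (h : LinearLowerBound t K) : 1 / t ≤ liminf (fun n => K n / n) atTop := by
  obtain ⟨c, -, hc⟩ := h
  have hlim : Tendsto (fun n : ℕ => 1 / t - c / n) atTop (nhds (1 / t)) := by
    simpa using tendsto_const_nhds.sub (tendsto_const_div_atTop_nhds_zero_nat c)
  rw [← hlim.liminf_eq]
  refine liminf_le_liminf ?_ hlim.isBoundedUnder_ge hK.isCoboundedUnder_ge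
  filter_upwards [eventually_ge_atTop 1] with n hn
  have hn0 : (0 : ℝ) < n := by exact_mod_cast hn
  calc 1 / t - c / n = (n / t - c) / n := by field_simp
    _ ≤ K n / n := by gcongr; exact hc n hn

theorem one_div_le_of_forall_rat {L : ℝ} (hs : 0 < s) (h : ∀ q : ℚ, s < q → 1 / (q : ℝ) ≤ L) :
    1 / s ≤ L := by
  by_contra! hL
  rcases le_or_gt L 0 with hL0 | hL0
  · obtain ⟨q, hq⟩ := exists_rat_gt s
    have : 0 < 1 / (q : ℝ) := by have := hs.trans hq; positivity
    linarith [h q hq]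
  · obtain ⟨q, hsq, hqL⟩ := exists_rat_btwn ((lt_one_div hL0 hs).1 hL)
    linarith [h q hsq, (lt_one_div (hs.trans hsq) hL0).1 hqL]

theorem LinearLowerBound.of_le_add (h : LinearLowerBound t K) {c : ℝ} (hc : 0 ≤ c)
    (hKH : ∀ m, K m ≤ H m + c) : LinearLowerBound t H := by
  obtain ⟨c', hc', h⟩ := h
  exact ⟨c' + c, by positivity, fun m hm => by linarith [h m hm, hKH m]⟩

theorem LinearLowerBound.of_add_div {q : ℝ} {N : ℕ}
    (h : LinearLowerBound q fun m => K m + m / N) (hN : 1 / (N : ℝ) ≤ 1 / q - 1 / t) :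
    LinearLowerBound t K := by
  obtain ⟨c, hc, h⟩ := h
  refine ⟨c, hc, fun m hm => ?_⟩
  have : (m : ℝ) / N ≤ m / q - m / t := by
    simpa [div_eq_mul_one_div (m : ℝ), mul_sub] using
      mul_le_mul_of_nonneg_left hN m.cast_nonneg
  linarith [h m hm]

theorem LinearLowerBound.of_rat_of_le_add_div (hs : 0 < s) (hst : s < t)
    (hH : ∀ N : ℕ, 0 < N → ∃ c, 0 ≤ c ∧ ∀ m, H m ≤ K m + m / N + c)
    (h : ∀ q : ℚ, s < q → LinearLowerBound q H) : LinearLowerBound t K := by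
  obtain ⟨q, hsq, hqt⟩ := exists_rat_btwn hst
  obtain ⟨N, hN⟩ := exists_nat_one_div_lt (sub_pos.2 (one_div_lt_one_div_of_lt (hs.trans hsq) hqt))
  obtain ⟨c, hc, hHK⟩ := hH (N + 1) N.succ_pos
  exact LinearLowerBound.of_add_div ((h q hsq).of_le_add hc hHK) (by exact_mod_cast hN.le)

end LinearLowerBound

theorem computableReal_ratCast (q : ℚ) : ComputableReal q :=
  ⟨fun _ => q, Computable.const q, fun n => by simp⟩

theorem stmt_14_general (s : ℝ) (hs1 : 1 ≤ s)
    (U : List Bool →. List Bool) (hU : Partrec U) (hUuniv : UnivSD U)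
    (T : List Bool →. List Bool) (hT : Partrec T) (hTuniv : UnivTM T)
    (x : ℕ → Bool) :
    ((Filter.liminf (fun n : ℕ => (Cpx T (prefixStr x n) : ℝ) / n) Filter.atTop ≥ 1 / s)
      ↔ (∀ t : ℝ, ComputableReal t → s < t → ∃ c : ℝ, 0 ≤ c ∧ ∀ m : ℕ, 1 ≤ m →
          (Cpx T (prefixStr x m) : ℝ) ≥ m / t - c)) ∧
    ((∀ t : ℝ, ComputableReal t → s < t → ∃ c : ℝ, 0 ≤ c ∧ ∀ m : ℕ, 1 ≤ m →
          (Cpx T (prefixStr x m) : ℝ) ≥ m / t - c)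
      ↔ (∀ t : ℝ, ComputableReal t → s < t → ∃ c : ℝ, 0 ≤ c ∧ ∀ m : ℕ, 1 ≤ m →
          (Cpx U (prefixStr x m) : ℝ) ≥ m / t - c)) := by
  have hs : 0 < s := by linarith
  have hlen (m : ℕ) : (prefixStr x m).length = m := by simp [prefixStr]
  have hK : IsBoundedUnder (· ≤ ·) atTop fun n => (Cpx T (prefixStr x n) : ℝ) / n := by
    obtain ⟨c, hc⟩ := hTuniv.exists_cpx_le_length
    exact isBoundedUnder_le_div_of_le_add (c := c) fun n => by exact_mod_cast hlen n ▸ hc _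
  refine ⟨⟨fun h t _ hst => ?_, fun h => ?_⟩, ⟨fun h t ht hst => ?_, fun h t _ hst => ?_⟩⟩
  · exact LinearLowerBound.of_lt_liminf (fun _ => Nat.cast_nonneg _) (hs.trans hst)
      ((one_div_lt_one_div_of_lt hs hst).trans_le h)
  · exact one_div_le_of_forall_rat hs fun q hq =>
      le_liminf_of_linearLowerBound hK (h q (computableReal_ratCast q) hq)
  · obtain ⟨c, hc⟩ := hTuniv.exists_cpx_le_cpx hU hUuniv.exists_mem
    exact LinearLowerBound.of_le_add (h t ht hst) c.cast_nonneg fun m => by exact_mod_cast hc _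
  · refine LinearLowerBound.of_rat_of_le_add_div hs hst (fun N hN => ?_)
      fun q hq => h q (computableReal_ratCast q) hq
    obtain ⟨c, hc, hUT⟩ := hUuniv.exists_cpx_le_cpx_add_length_div hT hTuniv hN
    exact ⟨c, hc, fun m => by simpa only [hlen] using hUT (prefixStr x m)⟩

/-- Characterisations of asymptotic `1/s`-randomness: the lower asymptotic
plain complexity is at least `1/s` iff the real is `1/t`-`K`-random for every
computable `t > s` iff it is Chaitin `1/t`-random for every computable `t > s`. -/
theorem stmt_14 (s : ℝ) (hs : ComputableReal s) (hs1 : 1 ≤ s)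
    (U : List Bool →. List Bool) (hU : Partrec U) (hUuniv : UnivSD U)
    (T : List Bool →. List Bool) (hT : Partrec T) (hTuniv : UnivTM T)
    (α : ℝ) (hα0 : 0 < α) (hα1 : α < 1) (x : ℕ → Bool) (hx : α = realDigits x) :
    ((Filter.liminf (fun n : ℕ => (Cpx T (prefixStr x n) : ℝ) / n) Filter.atTop ≥ 1 / s)
      ↔ (∀ t : ℝ, ComputableReal t → s < t → ∃ c : ℝ, 0 ≤ c ∧ ∀ m : ℕ, 1 ≤ m →
          (Cpx T (prefixStr x m) : ℝ) ≥ m / t - c)) ∧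
    ((∀ t : ℝ, ComputableReal t → s < t → ∃ c : ℝ, 0 ≤ c ∧ ∀ m : ℕ, 1 ≤ m →
          (Cpx T (prefixStr x m) : ℝ) ≥ m / t - c)
      ↔ (∀ t : ℝ, ComputableReal t → s < t → ∃ c : ℝ, 0 ≤ c ∧ ∀ m : ℕ, 1 ≤ m →
          (Cpx U (prefixStr x m) : ℝ) ≥ m / t - c)) :=
  stmt_14_general s hs1 U hU hUuniv T hT hTuniv x
end

section
/- For every integer N ≥ 2, every positive rational q can be written as a finite sum of distinct unit fractions whose denominators are all greater than or equal to N: there exists a finite set S of natural numbers with n ≥ N for all n ∈ S and q = ∑_{n ∈ S} 1/n. -/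
/-!
Start with the harmonic block `1/N + 1/(N+1) + ⋯`: since the harmonic series diverges there is a
last `m` with `∑_{N ≤ n < m} 1/n ≤ q`, and the remainder `r = q - ∑_{N ≤ n < m} 1/n` satisfies
`0 ≤ r < 1/m`. The remainder is expanded by the Fibonacci–Sylvester greedy algorithm: subtracting
`1/n` with `n = ⌈1/r⌉` leaves a rational of strictly smaller numerator which is `< 1/n`, so the
denominators produced increase, all exceed `m`, and the process terminates.
-/

open Finset Filter

theorem Rat.num_sub_one_div_lt {r : ℚ} {n : ℕ} (hr : 0 < r) (hn : 0 < n)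
    (hrn : r * (n - 1) < 1) : (r - 1 / n).num < r.num := by
  have hnum : 0 < r.num := Rat.num_pos.mpr hr
  have hden : (0 : ℚ) < r.den := mod_cast r.den_pos
  have hr_eq : r = r.num / r.den := (Rat.num_div_den r).symm
  have hdiff : r - 1 / n = ((r.num * n - r.den : ℤ) : ℚ) / ((r.den * n : ℤ) : ℚ) := by
    calc r - 1 / n = r.num / r.den - 1 / n := by rw [Rat.num_div_den]
      _ = _ := by push_cast; field_simp
  have hlt : r.num * n - r.den < r.num := by
    have : (r.num : ℚ) * (n - 1) < r.den := by
      rw [hr_eq] at hrn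
      rwa [div_mul_eq_mul_div, div_lt_one hden] at hrn
    have : r.num * ((n : ℤ) - 1) < r.den := by exact_mod_cast this
    linarith
  rcases le_or_gt (r - 1 / n) 0 with hle | hpos
  · exact (Rat.num_nonpos.mpr hle).trans_lt hnum
  · have hbn : (0 : ℤ) < r.den * n := by positivity
    have hc : 0 < r.num * n - r.den := by
      rw [hdiff] at hpos
      exact_mod_cast (div_pos_iff_of_pos_right (by exact_mod_cast hbn)).mp hpos
    have hdvd : (r - 1 / n).num ∣ r.num * n - r.den := by
      rw [hdiff, ← Rat.divInt_eq_div]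
      exact Rat.num_dvd _ hbn.ne'
    exact (Int.le_of_dvd hc hdvd).trans_lt hlt

theorem exists_le_and_lt_succ {α : Type*} [LinearOrder α] {s : ℕ → α} {a : α} (h0 : s 0 ≤ a)
    (h : ∃ k, a < s k) : ∃ j, s j ≤ a ∧ a < s (j + 1) := by
  classical
  have hpos : Nat.find h ≠ 0 := fun h' => (Nat.find_spec h).not_ge (h' ▸ h0)
  obtain ⟨j, hj⟩ := Nat.exists_eq_succ_of_ne_zero hpos
  refine ⟨j, not_lt.mp (Nat.find_min h (by omega)), ?_⟩
  rw [← Nat.succ_eq_add_one, ← hj]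
  exact Nat.find_spec h

theorem exists_lt_sum_Ico_one_div (N : ℕ) (q : ℚ) :
    ∃ k, q < ∑ n ∈ Ico N (N + k), (1 : ℚ) / n := by
  have hdiv : Tendsto (fun k => ∑ i ∈ range k, (1 : ℝ) / (i + N)) atTop atTop := by
    rw [← not_summable_iff_tendsto_nat_atTop_of_nonneg (fun i => by positivity)]
    exact_mod_cast mt (summable_nat_add_iff N).1 Real.not_summable_one_div_natCast
  obtain ⟨k, hk⟩ := (hdiv.eventually_gt_atTop (q : ℝ)).exists
  refine ⟨k, ?_⟩
  simp_rw [sum_Ico_eq_sum_range, Nat.add_sub_cancel_left, add_comm N]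
  rw [← Rat.cast_lt (K := ℝ)]
  push_cast
  exact hk

theorem exists_finset_sum_one_div_eq_of_lt {r : ℚ} {m : ℕ} (hr : 0 ≤ r) (hrm : r < 1 / m) :
    ∃ S : Finset ℕ, (∀ n ∈ S, m < n) ∧ r = ∑ n ∈ S, (1 : ℚ) / n := by
  induction h : r.num.toNat using Nat.strong_induction_on generalizing r m with
  | _ k ih =>
  rcases hr.eq_or_lt with rfl | hr
  · exact ⟨∅, by simp, by simp⟩
  have hm : (0 : ℚ) < m := one_div_pos.1 (hr.trans hrm)
  set n := ⌈r⁻¹⌉₊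
  have hinv_le : r⁻¹ ≤ n := Nat.le_ceil _
  have hmn : m < n := by
    have : (m : ℚ) < r⁻¹ := by rwa [← one_div, lt_one_div hm hr]
    exact_mod_cast this.trans_le hinv_le
  have hn : 0 < n := by omega
  have hnr : 1 / n ≤ r := by rwa [one_div_le (by positivity) hr, one_div]
  have hrn : r * (n - 1) < 1 := by
    have : (n : ℚ) - 1 < r⁻¹ := by linarith [Nat.ceil_lt_add_one (inv_nonneg.2 hr.le)]
    calc r * (n - 1) < r * r⁻¹ := by gcongr
      _ = 1 := mul_inv_cancel₀ hr.ne'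
  have hr' : r - 1 / n < 1 / n := by
    have hr1 : r < 1 := hrm.trans_le ((div_le_one hm).2 (Nat.one_le_cast.2 (Nat.cast_pos.1 hm)))
    have : r * n < 2 := by linarith
    rw [sub_lt_iff_lt_add, ← two_mul, mul_one_div, lt_div_iff₀ (by positivity)]
    exact this
  have hnum : (r - 1 / n).num.toNat < k := by
    have := Rat.num_sub_one_div_lt hr hn hrn
    have := Rat.num_pos.2 hr
    omega
  obtain ⟨S, hS, hsum⟩ := ih _ hnum (sub_nonneg.2 hnr) hr' rfl
  refine ⟨insert n S, ?_, ?_⟩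
  · simp only [mem_insert, forall_eq_or_imp]
    exact ⟨hmn, fun k hk => hmn.trans (hS k hk)⟩
  · rw [sum_insert fun hmem => (hS n hmem).false, ← hsum]
    ring

theorem stmt_19_general (N : ℕ) (q : ℚ) (hq : 0 < q) :
    ∃ S : Finset ℕ, (∀ n ∈ S, N ≤ n) ∧ q = ∑ n ∈ S, (1 : ℚ) / n := by
  obtain ⟨j, hle, hlt⟩ := exists_le_and_lt_succ (s := fun j => ∑ n ∈ Ico N (N + j), (1 : ℚ) / n)
    (by simpa using hq.le) (exists_lt_sum_Ico_one_div N q)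
  rw [← add_assoc, sum_Ico_succ_top (by omega)] at hlt
  obtain ⟨S, hS, hsum⟩ :=
    exists_finset_sum_one_div_eq_of_lt (sub_nonneg.2 hle) (sub_lt_iff_lt_add'.2 hlt)
  have hdisj : Disjoint (Ico N (N + j)) S := disjoint_left.2 fun n hn hnS => by
    have := hS n hnS
    simp only [mem_Ico] at hn
    omega
  refine ⟨Ico N (N + j) ∪ S, fun n hn => ?_, ?_⟩
  · rcases mem_union.1 hn with hn | hn
    · exact (mem_Ico.1 hn).1
    · have := hS n hn
      omega
  · rw [sum_union hdisj, ← hsum]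
    ring

/-- Every positive rational can be written as a finite sum of distinct unit
fractions whose denominators are all at least `N`. -/
theorem stmt_19 (N : ℕ) (hN : 2 ≤ N) (q : ℚ) (hq : 0 < q) :
    ∃ S : Finset ℕ, (∀ n ∈ S, N ≤ n) ∧ q = ∑ n ∈ S, (1 : ℚ) / n :=
  stmt_19_general N q hq
end
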